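/- Let π' = (a_1,b_1)...(a_k,b_k) be a fixed-point free involution of S_{2k} in standard form. A permutation w of S_{2k} satisfies m(w)·α' = π' and ℓ(w) = L'(π') — where α' = (1,2)(3,4)···(2k−1,2k) and L'(π') is the inversion number of the word (a_1,b_1,...,a_k,b_k) — if and only if: (1) for each i, a_i occurs immediately before b_i in the one-line notation of w; and (2) whenever i<j and b_i<b_j, b_i occurs before a_j in w. -/

import Mathlib

/-- The number of inversions (Coxeter length) of a permutation of `Fin n`. -/
def invNum {n : ℕ} (w : Equiv.Perm (Fin n)) : ℕ :=
  (Finset.univ.filter fun p : Fin n × Fin n => p.1 < p.2 ∧ w p.2 < w p.1).card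

/-- The simple transposition `s_i = (i, i+1)` (0-indexed) in `S_n`, or `1` if out of range. -/
def sNat (n i : ℕ) : Equiv.Perm (Fin n) :=
  if h : i + 1 < n then Equiv.swap ⟨i, Nat.lt_of_succ_lt h⟩ ⟨i + 1, h⟩ else 1

/-- The Richardson–Springer monoid action of `m(s_i)` on fixed-point free involutions:
`s_i π s_i` if `ℓ(s_i π s_i) = ℓ(π) + 2`, and `π` otherwise. -/
def RSfpf (n i : ℕ) (π : Equiv.Perm (Fin n)) : Equiv.Perm (Fin n) :=
  if invNum (sNat n i * π * sNat n i) = invNum π + 2 then sNat n i * π * sNat n i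
  else π

/-- The word `(a_1, b_1, a_2, b_2, …, a_k, b_k)` of a fixed-point free involution in
standard form, as a function `Fin (2k) → Fin (2k)`. -/
def word (k : ℕ) (a b : Fin k → Fin (2 * k)) (j : Fin (2 * k)) : Fin (2 * k) :=
  if (j : ℕ) % 2 = 0 then a ⟨(j : ℕ) / 2, by have := j.2; omega⟩
  else b ⟨(j : ℕ) / 2, by have := j.2; omega⟩

/-- The number of inversions of the word `(a_1, b_1, …, a_k, b_k)`. -/
def invWord (k : ℕ) (a b : Fin k → Fin (2 * k)) : ℕ :=
  (Finset.univ.filter fun p : Fin (2 * k) × Fin (2 * k) =>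
    p.1 < p.2 ∧ word k a b p.2 < word k a b p.1).card

/-- The fixed-point free involution `α' = (1,2)(3,4)⋯(2k−1,2k)` of `S_{2k}`
(0-indexed: it swaps `2m` and `2m+1` for each `m`). -/
def alpha (k : ℕ) : Equiv.Perm (Fin (2 * k)) :=
  Function.Involutive.toPerm
    (fun x => ⟨2 * ((x : ℕ) / 2) + (1 - (x : ℕ) % 2), by have := x.2; omega⟩)
    (by intro x; apply Fin.ext; simp only [Fin.val_mk]; omega)

/-!
Every `m(s_i)` either fixes an involution or conjugates it by `s_i` while raising its length by
exactly two, and `ℓ(u ρ u⁻¹) ≤ ℓ(ρ) + 2 ℓ(u)` always holds. Grouping inversions by pairs of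
arcs gives `ℓ(α') = k` and `ℓ(π') = k + 2 L'(π')`, so for `ℓ(w) = L'(π')` a reduced word of `w`
carries `α'` to `π'` exactly when `π' = w α' w⁻¹`, i.e. when `w` puts every arc `{a_i, b_i}` into
positions `{2m - 1, 2m}`. For such `w`, compare the inversions of `w` and of the word
`(a_1, b_1, …, a_k, b_k)` arc pair by arc pair: inside an arc the word has none, and for arcs
`i < j` the word's order (arc `i` first) is the cheaper one, strictly unless the arcs are nested.
Hence `ℓ(w) = L'(π')` holds exactly when (1) and (2) do.
-/

open Equiv Finset

section ReducedWords

variable {n : ℕ}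

lemma invNum_one : invNum (1 : Perm (Fin n)) = 0 := by
  simp only [invNum, Perm.one_apply]
  exact card_eq_zero.2 (filter_eq_empty_iff.2 fun _ _ h => lt_asymm h.1 h.2)

lemma invNum_inv (u : Perm (Fin n)) : invNum u⁻¹ = invNum u := by
  unfold invNum
  exact card_bij' (fun p _ => (u⁻¹ p.2, u⁻¹ p.1)) (fun p _ => (u p.2, u p.1))
    (by simp +contextual) (by simp +contextual) (by simp) (by simp)

lemma sNat_mul_self (i : ℕ) : sNat n i * sNat n i = 1 := by
  unfold sNat; split <;> simp

lemma sNat_inv (i : ℕ) : (sNat n i)⁻¹ = sNat n i :=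
  inv_eq_of_mul_eq_one_right (sNat_mul_self i)

lemma sNat_mul_sNat_mul (i : ℕ) (x : Perm (Fin n)) : sNat n i * (sNat n i * x) = x := by
  rw [← mul_assoc, sNat_mul_self, one_mul]

lemma swap_succ_lt_swap_succ_iff {x y p q : Fin n} (hxy : (y : ℕ) = x + 1) :
    swap x y p < swap x y q ↔ (p < q ∧ ¬(p = x ∧ q = y)) ∨ (p = y ∧ q = x) := by
  simp only [swap_apply_def, Fin.ext_iff, Fin.lt_def]
  split_ifs <;> omega

lemma invNum_mul_sNat_of_lt {i : ℕ} (hi : i + 1 < n) (u : Perm (Fin n))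
    (hasc : u ⟨i, by omega⟩ < u ⟨i + 1, hi⟩) :
    invNum (u * sNat n i) = invNum u + 1 := by
  set x : Fin n := ⟨i, by omega⟩
  set y : Fin n := ⟨i + 1, hi⟩
  have hs : sNat n i = swap x y := dif_pos hi
  have hxy : (y : ℕ) = x + 1 := rfl
  have hrel : invNum (u * sNat n i) = (univ.filter fun p : Fin n × Fin n =>
      swap x y p.1 < swap x y p.2 ∧ u p.2 < u p.1).card := by
    refine card_equiv ((swap x y).prodCongr (swap x y)) fun p => ?_
    simp [hs]
  have hins : (univ.filter fun p : Fin n × Fin n =>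
      swap x y p.1 < swap x y p.2 ∧ u p.2 < u p.1) =
      insert (y, x) (univ.filter fun p : Fin n × Fin n => p.1 < p.2 ∧ u p.2 < u p.1) := by
    ext ⟨p, q⟩
    simp only [mem_filter, mem_univ, true_and, mem_insert, Prod.mk.injEq,
      swap_succ_lt_swap_succ_iff hxy]
    constructor
    · rintro ⟨(⟨hpq, -⟩ | hyx), hu⟩
      · exact Or.inr ⟨hpq, hu⟩
      · exact Or.inl hyx
    · rintro (⟨rfl, rfl⟩ | ⟨hpq, hu⟩)
      · exact ⟨Or.inr ⟨rfl, rfl⟩, hasc⟩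
      · refine ⟨Or.inl ⟨hpq, ?_⟩, hu⟩
        rintro ⟨rfl, rfl⟩
        exact lt_asymm hu hasc
  rw [hrel, hins, card_insert_of_notMem (by simp [x, y]), invNum]

lemma invNum_mul_sNat_of_gt {i : ℕ} (hi : i + 1 < n) (u : Perm (Fin n))
    (hdes : u ⟨i + 1, hi⟩ < u ⟨i, by omega⟩) :
    invNum u = invNum (u * sNat n i) + 1 := by
  have hs : sNat n i = swap ⟨i, by omega⟩ ⟨i + 1, hi⟩ := dif_pos hi
  have := invNum_mul_sNat_of_lt hi (u * sNat n i) (by simpa [hs] using hdes)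
  rwa [mul_assoc, sNat_mul_self, mul_one] at this

lemma invNum_mul_sNat_le (u : Perm (Fin n)) (i : ℕ) :
    invNum (u * sNat n i) ≤ invNum u + 1 := by
  by_cases hi : i + 1 < n
  · have hne : u ⟨i, by omega⟩ ≠ u ⟨i + 1, hi⟩ := u.injective.ne (by simp)
    rcases lt_or_gt_of_ne hne with hasc | hdes
    · exact (invNum_mul_sNat_of_lt hi u hasc).le
    · have := invNum_mul_sNat_of_gt hi u hdes
      omega
  · simp [sNat, hi]

lemma invNum_sNat_mul_le (u : Perm (Fin n)) (i : ℕ) :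
    invNum (sNat n i * u) ≤ invNum u + 1 := by
  simpa [← invNum_inv (sNat n i * u), sNat_inv, invNum_inv] using invNum_mul_sNat_le u⁻¹ i

lemma invNum_sNat_mul_mul_sNat_le (ρ : Perm (Fin n)) (i : ℕ) :
    invNum (sNat n i * ρ * sNat n i) ≤ invNum ρ + 2 :=
  (invNum_mul_sNat_le _ i).trans (by have := invNum_sNat_mul_le ρ i; omega)

lemma exists_invNum_eq_invNum_mul_sNat_add_one {u : Perm (Fin n)} (hu : u ≠ 1) :
    ∃ i, invNum u = invNum (u * sNat n i) + 1 := by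
  by_contra! hnone
  suffices hmono : StrictMono u from hu (Equiv.ext fun x => congrFun hmono.eq_id x)
  cases n with
  | zero => exact fun x => x.elim0
  | succ m =>
    refine Fin.strictMono_iff_lt_succ.2 fun i => ?_
    have hne : u i.castSucc ≠ u i.succ := u.injective.ne (by simp [Fin.ext_iff])
    refine lt_of_le_of_ne (not_lt.1 fun hdes => hnone i ?_) hne
    exact invNum_mul_sNat_of_gt (by omega) u hdes

lemma eq_one_of_invNum_eq_zero {u : Perm (Fin n)} (hu : invNum u = 0) : u = 1 := by
  by_contra hne
  obtain ⟨i, hi⟩ := exists_invNum_eq_invNum_mul_sNat_add_one hne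
  omega

lemma conj_eq_conj_mul_sNat (u ρ : Perm (Fin n)) (i : ℕ) :
    u * ρ * u⁻¹ = (u * sNat n i) * (sNat n i * ρ * sNat n i) * (u * sNat n i)⁻¹ := by
  simp only [mul_inv_rev, sNat_inv, mul_assoc, sNat_mul_sNat_mul]

lemma invNum_conj_le (u ρ : Perm (Fin n)) :
    invNum (u * ρ * u⁻¹) ≤ invNum ρ + 2 * invNum u := by
  induction hm : invNum u generalizing u ρ with
  | zero => simp [eq_one_of_invNum_eq_zero hm]
  | succ m ih =>
    obtain ⟨i, hi⟩ := exists_invNum_eq_invNum_mul_sNat_add_one (u := u) (by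
      rintro rfl; simp [invNum_one] at hm)
    rw [conj_eq_conj_mul_sNat u ρ i]
    have := ih (u * sNat n i) (sNat n i * ρ * sNat n i) (by omega)
    have := invNum_sNat_mul_mul_sNat_le ρ i
    omega

lemma invNum_RSfpf_le (i : ℕ) (ρ : Perm (Fin n)) : invNum (RSfpf n i ρ) ≤ invNum ρ + 2 := by
  unfold RSfpf
  split_ifs <;> omega

lemma RSfpf_eq_of_invNum_eq {i : ℕ} {ρ : Perm (Fin n)}
    (h : invNum (RSfpf n i ρ) = invNum ρ + 2) : RSfpf n i ρ = sNat n i * ρ * sNat n i := by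
  unfold RSfpf at h ⊢
  split_ifs at h ⊢
  · rfl
  · omega

lemma invNum_foldr_RSfpf_le (l : List ℕ) (ρ : Perm (Fin n)) :
    invNum (l.foldr (RSfpf n) ρ) ≤ invNum ρ + 2 * l.length := by
  induction l with
  | nil => simp
  | cons i l ih =>
    have := invNum_RSfpf_le i (l.foldr (RSfpf n) ρ)
    simp only [List.foldr_cons, List.length_cons]
    omega

lemma foldr_RSfpf_eq_conj {l : List ℕ} {ρ : Perm (Fin n)}
    (h : invNum (l.foldr (RSfpf n) ρ) = invNum ρ + 2 * l.length) :
    l.foldr (RSfpf n) ρ = (l.map (sNat n)).prod * ρ * ((l.map (sNat n)).prod)⁻¹ := by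
  induction l with
  | nil => simp
  | cons i l ih =>
    have hle := invNum_foldr_RSfpf_le l ρ
    have hstep := invNum_RSfpf_le i (l.foldr (RSfpf n) ρ)
    simp only [List.foldr_cons, List.length_cons] at h ⊢
    rw [RSfpf_eq_of_invNum_eq (by omega), ih (by omega)]
    simp only [List.map_cons, List.prod_cons, mul_inv_rev, sNat_inv, mul_assoc]

lemma exists_reducedWord_foldr_RSfpf_eq_conj (u ρ : Perm (Fin n))
    (h : invNum (u * ρ * u⁻¹) = invNum ρ + 2 * invNum u) :
    ∃ l : List ℕ, (l.map (sNat n)).prod = u ∧ l.length = invNum u ∧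
      l.foldr (RSfpf n) ρ = u * ρ * u⁻¹ := by
  induction hm : invNum u generalizing u ρ with
  | zero =>
    obtain rfl := eq_one_of_invNum_eq_zero hm
    exact ⟨[], by simp, rfl, by simp⟩
  | succ m ih =>
    obtain ⟨i, hi⟩ := exists_invNum_eq_invNum_mul_sNat_add_one (u := u) (by
      rintro rfl; simp [invNum_one] at hm)
    have hconj := conj_eq_conj_mul_sNat u ρ i
    have hle := invNum_conj_le (u * sNat n i) (sNat n i * ρ * sNat n i)
    have hρ' := invNum_sNat_mul_mul_sNat_le ρ i
    rw [hconj] at h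
    obtain ⟨l, hprod, hlen, hfold⟩ :=
      ih (u * sNat n i) (sNat n i * ρ * sNat n i) (by omega) (by omega)
    refine ⟨l ++ [i], ?_, by simp [hlen], ?_⟩
    · simp [hprod, mul_assoc, sNat_mul_self]
    · rw [List.foldr_append, List.foldr_cons, List.foldr_nil, RSfpf, if_pos (by omega), hfold,
        hconj]

theorem exists_reducedWord_foldr_RSfpf_iff {u ρ σ : Perm (Fin n)}
    (h : invNum σ = invNum ρ + 2 * invNum u) :
    (∃ l : List ℕ, (l.map (sNat n)).prod = u ∧ l.length = invNum u ∧
      l.foldr (RSfpf n) ρ = σ) ↔ σ = u * ρ * u⁻¹ := by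
  constructor
  · rintro ⟨l, rfl, hlen, rfl⟩
    exact foldr_RSfpf_eq_conj (by rw [h, hlen])
  · rintro rfl
    exact exists_reducedWord_foldr_RSfpf_eq_conj u ρ h

end ReducedWords

lemma sum_sum_eq_iff_of_le {ι : Type*} [Fintype ι] [LinearOrder ι] {f g : ι → ι → ℕ}
    (hdiag : ∀ i, g i i ≤ f i i) (hlt : ∀ i j, i < j → g i j + g j i ≤ f i j + f j i) :
    ∑ i, ∑ j, f i j = ∑ i, ∑ j, g i j ↔
      (∀ i, f i i = g i i) ∧ ∀ i j, i < j → f i j + f j i = g i j + g j i := by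
  have hsym (h : ι → ι → ℕ) : 2 * ∑ i, ∑ j, h i j = ∑ p : ι × ι, (h p.1 p.2 + h p.2 p.1) := by
    rw [Fintype.sum_prod_type, two_mul]
    simp only [sum_add_distrib]
    rw [sum_comm (f := fun i j => h j i)]
  have hle (i j : ι) : g i j + g j i ≤ f i j + f j i := by
    rcases lt_trichotomy i j with hij | rfl | hji
    · exact hlt i j hij
    · have := hdiag i; omega
    · have := hlt j i hji; omega
  calc ∑ i, ∑ j, f i j = ∑ i, ∑ j, g i j
        ↔ 2 * ∑ i, ∑ j, g i j = 2 * ∑ i, ∑ j, f i j := by omega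
    _ ↔ ∀ i j, g i j + g j i = f i j + f j i := by
        rw [hsym, hsym, sum_eq_sum_iff_of_le fun p _ => hle p.1 p.2]
        simp
    _ ↔ _ := by
        refine ⟨fun h => ⟨fun i => by have := h i i; omega, fun i j _ => (h i j).symm⟩, ?_⟩
        rintro ⟨hd, hl⟩ i j
        rcases lt_trichotomy i j with hij | rfl | hji
        · exact (hl i j hij).symm
        · have := hd i; omega
        · have := hl j i hji; omega

lemma sum_sum_eq_of_diag_eq {ι : Type*} [Fintype ι] [LinearOrder ι] {f g : ι → ι → ℕ}
    (hdiag : ∀ i, f i i = g i i) (hlt : ∀ i j, i < j → f i j + f j i = g i j + g j i) :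
    ∑ i, ∑ j, f i j = ∑ i, ∑ j, g i j :=
  (sum_sum_eq_iff_of_le (fun i => (hdiag i).ge) fun i j hij => (hlt i j hij).ge).2 ⟨hdiag, hlt⟩

section Blocks

variable {κ : Type*} {n : ℕ}

def arcEnd {α : Type*} (a b : κ → α) : κ × Bool → α
  | (i, false) => a i
  | (i, true) => b i

def blockInv (pos val : κ × Bool → Fin n) (i j : κ) : ℕ :=
  ∑ s, ∑ t, if pos (i, s) < pos (j, t) ∧ val (j, t) < val (i, s) then 1 else 0

def pairInv (val : κ × Bool → Fin n) (i j : κ) : ℕ :=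
  ∑ s, ∑ t, if val (j, t) < val (i, s) then 1 else 0

lemma card_inversions_eq_sum_blockInv [Fintype κ] (F : Fin n → Fin n) {pos val : κ × Bool → Fin n}
    (hpos : Function.Bijective pos) (hF : ∀ P, F (pos P) = val P) :
    (univ.filter fun p : Fin n × Fin n => p.1 < p.2 ∧ F p.2 < F p.1).card =
      ∑ i, ∑ j, blockInv pos val i j := by
  set e := Equiv.ofBijective pos hpos
  calc _ = ∑ x, ∑ y, if x < y ∧ F y < F x then 1 else 0 := by
        rw [card_filter, Fintype.sum_prod_type]
    _ = ∑ P, ∑ Q, if pos P < pos Q ∧ val Q < val P then 1 else 0 := by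
        rw [← e.sum_comp]
        refine sum_congr rfl fun P _ => ?_
        rw [← e.sum_comp]
        simp [e, hF]
    _ = ∑ i, ∑ j, blockInv pos val i j := by
        simp only [blockInv, Fintype.sum_prod_type]
        exact sum_congr rfl fun i _ => sum_comm

variable {pos val : κ × Bool → Fin n} {i j : κ}

lemma blockInv_of_forall_lt (h : ∀ s t, pos (i, s) < pos (j, t)) :
    blockInv pos val i j = pairInv val i j := by
  simp [blockInv, pairInv, h]

lemma blockInv_of_forall_gt (h : ∀ s t, pos (j, t) < pos (i, s)) : blockInv pos val i j = 0 := by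
  simp [blockInv, fun s t => (h t s).not_gt]

lemma blockInv_same : blockInv pos pos i j = 0 :=
  sum_eq_zero fun _ _ => sum_eq_zero fun _ _ => if_neg fun h => lt_asymm h.1 h.2

lemma blockInv_self (h : val (i, false) < val (i, true)) :
    blockInv pos val i i = if pos (i, true) < pos (i, false) then 1 else 0 := by
  simp only [blockInv, Fintype.sum_bool, lt_irrefl, if_false, h, h.not_gt, and_false,
    and_true]
  ring

end Blocks

section StandardForm

variable {k : ℕ}

structure IsStandardForm (π : Perm (Fin (2 * k))) (a b : Fin k → Fin (2 * k)) : Prop where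
  mul_self : π * π = 1
  lt : ∀ i, a i < b i
  strictMono : StrictMono a
  apply_fst : ∀ i, π (a i) = b i

variable {π : Perm (Fin (2 * k))} {a b : Fin k → Fin (2 * k)}

lemma IsStandardForm.apply_snd (h : IsStandardForm π a b) (i : Fin k) : π (b i) = a i := by
  rw [← h.apply_fst, ← Perm.mul_apply, h.mul_self, Perm.one_apply]

lemma IsStandardForm.fst_ne_snd (h : IsStandardForm π a b) (i j : Fin k) : a i ≠ b j := by
  intro he
  have hba : b i = a j := by rw [← h.apply_fst, he, h.apply_snd]
  have := h.lt i
  have := h.lt j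
  omega

lemma IsStandardForm.snd_injective (h : IsStandardForm π a b) : Function.Injective b :=
  fun i j he => h.strictMono.injective (by rw [← h.apply_snd, he, h.apply_snd])

lemma IsStandardForm.arcEnd_bijective (h : IsStandardForm π a b) :
    Function.Bijective (arcEnd a b) := by
  refine (Fintype.bijective_iff_injective_and_card _).2 ⟨?_, by simp; ring⟩
  rintro ⟨i, _ | _⟩ ⟨j, _ | _⟩ he <;> simp only [arcEnd] at he
  · rw [h.strictMono.injective he]
  · exact absurd he (h.fst_ne_snd i j)
  · exact absurd he.symm (h.fst_ne_snd j i)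
  · rw [h.snd_injective he]

lemma IsStandardForm.arcEnd_swap_bijective (h : IsStandardForm π a b) :
    Function.Bijective (arcEnd b a) := by
  convert h.arcEnd_bijective.comp (Function.Involutive.bijective (f := Prod.map id not)
    fun P => Prod.ext rfl (Bool.not_not _))
  ext ⟨i, _ | _⟩ <;> rfl

lemma IsStandardForm.pairInv_le_pairInv (h : IsStandardForm π a b) {i j : Fin k} (hij : i < j) :
    pairInv (arcEnd a b) i j ≤ pairInv (arcEnd a b) j i ∧
      (pairInv (arcEnd a b) i j = pairInv (arcEnd a b) j i ↔ b j < b i) := by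
  have := h.lt i
  have := h.lt j
  have := h.strictMono hij
  simp only [pairInv, Fintype.sum_bool, arcEnd, Fin.lt_def]
  refine ⟨by split_ifs <;> omega, fun he => ?_, fun hji => by split_ifs <;> omega⟩
  by_contra hij
  split_ifs at he <;> omega

lemma IsStandardForm.blockInv_arcEnd_swap_add (h : IsStandardForm π a b) {i j : Fin k}
    (hij : i < j) :
    blockInv (arcEnd b a) (arcEnd a b) i j + blockInv (arcEnd b a) (arcEnd a b) j i =
      2 * pairInv (arcEnd a b) i j := by
  have := h.lt i
  have := h.lt j
  have := h.strictMono hij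
  have := h.fst_ne_snd j i
  have := h.snd_injective.ne hij.ne
  simp only [blockInv, pairInv, Fintype.sum_bool, arcEnd, Fin.lt_def]
  obtain hcfg | hcfg | hcfg : b i < a j ∨ (a j < b i ∧ b i < b j) ∨ b j < b i := by omega
  all_goals simp (disch := omega) [if_pos, if_neg]

def alphaFst (i : Fin k) : Fin (2 * k) := ⟨2 * i, by omega⟩

def alphaSnd (i : Fin k) : Fin (2 * k) := ⟨2 * i + 1, by omega⟩

lemma alpha_apply_val (x : Fin (2 * k)) :
    (alpha k x : ℕ) = 2 * ((x : ℕ) / 2) + (1 - (x : ℕ) % 2) := rfl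

lemma isStandardForm_alpha : IsStandardForm (alpha k) alphaFst alphaSnd where
  mul_self := Perm.ext fun x => Fin.ext (by
    simp only [Perm.mul_apply, Perm.one_apply, alpha_apply_val]; omega)
  lt i := by simp only [alphaFst, alphaSnd, Fin.mk_lt_mk]; omega
  strictMono i j hij := by simp only [alphaFst, Fin.mk_lt_mk]; omega
  apply_fst i := Fin.ext (by simp only [alpha_apply_val, alphaFst, alphaSnd]; omega)

lemma word_arcEnd_alpha (P : Fin k × Bool) :
    word k a b (arcEnd alphaFst alphaSnd P) = arcEnd a b P := by
  obtain ⟨i, _ | _⟩ := P <;> simp [word, arcEnd, alphaFst, alphaSnd, Nat.add_mod, Nat.mul_add_div]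

lemma invWord_eq_sum_blockInv :
    invWord k a b = ∑ i, ∑ j, blockInv (arcEnd alphaFst alphaSnd) (arcEnd a b) i j :=
  card_inversions_eq_sum_blockInv _ isStandardForm_alpha.arcEnd_bijective word_arcEnd_alpha

lemma arcEnd_alpha_lt_of_lt {i j : Fin k} (hij : i < j) (s t : Bool) :
    arcEnd alphaFst alphaSnd (i, s) < arcEnd alphaFst alphaSnd (j, t) := by
  rw [Fin.lt_def] at hij
  cases s <;> cases t <;> simp only [arcEnd, alphaFst, alphaSnd, Fin.mk_lt_mk] <;> omega

lemma blockInv_alpha_add (val : Fin k × Bool → Fin (2 * k)) {i j : Fin k} (hij : i < j) :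
    blockInv (arcEnd alphaFst alphaSnd) val i j + blockInv (arcEnd alphaFst alphaSnd) val j i =
      pairInv val i j := by
  rw [blockInv_of_forall_lt (arcEnd_alpha_lt_of_lt hij),
    blockInv_of_forall_gt fun s t => arcEnd_alpha_lt_of_lt hij t s, add_zero]

lemma IsStandardForm.blockInv_alpha_self (h : IsStandardForm π a b) (i : Fin k) :
    blockInv (arcEnd alphaFst alphaSnd) (arcEnd a b) i i = 0 := by
  rw [blockInv_self (h.lt i), if_neg (show ¬arcEnd alphaFst alphaSnd (i, true) <
    arcEnd alphaFst alphaSnd (i, false) from (isStandardForm_alpha.lt i).not_gt)]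

theorem IsStandardForm.invNum_eq (h : IsStandardForm π a b) :
    invNum π = k + 2 * invWord k a b := by
  have hinv := card_inversions_eq_sum_blockInv π (pos := arcEnd b a) (val := arcEnd a b)
    h.arcEnd_swap_bijective (by rintro ⟨i, _ | _⟩; exacts [h.apply_snd i, h.apply_fst i])
  -- each arc is one inversion of `π`, each pair of arcs twice as many as in the word
  rw [invNum, hinv, invWord_eq_sum_blockInv, sum_sum_eq_of_diag_eq
    (g := fun i j => 2 * blockInv (arcEnd alphaFst alphaSnd) (arcEnd a b) i j +
      if i = j then 1 else 0)]
  · simp [sum_add_distrib, mul_sum, add_comm]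
  · intro i
    rw [h.blockInv_alpha_self, blockInv_self (val := arcEnd a b) (h.lt i),
      if_pos (show arcEnd b a (i, true) < arcEnd b a (i, false) from h.lt i), if_pos rfl]
  · intro i j hij
    rw [h.blockInv_arcEnd_swap_add hij, if_neg hij.ne, if_neg hij.ne', ← blockInv_alpha_add _ hij]
    ring

lemma invNum_alpha : invNum (alpha k) = k := by
  have hword : invWord k (alphaFst (k := k)) alphaSnd = 0 := by
    simp only [invWord_eq_sum_blockInv, blockInv_same, sum_const_zero]
  simpa [hword] using (isStandardForm_alpha (k := k)).invNum_eq

lemma eq_alpha_of_adjacent {ρ : Perm (Fin (2 * k))} (hρ : ρ * ρ = 1)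
    (hadj : ∀ p, (ρ p : ℕ) = p + 1 ∨ (p : ℕ) = ρ p + 1) : ρ = alpha k := by
  have hinv (p) : ρ (ρ p) = p := by rw [← Perm.mul_apply, hρ, Perm.one_apply]
  suffices key : ∀ m (p : Fin (2 * k)), (p : ℕ) = m → (ρ p : ℕ) = alpha k p from
    Perm.ext fun p => Fin.ext (key _ p rfl)
  intro m
  induction m using Nat.strong_induction_on with
  | _ m ih =>
  intro p hp
  rw [alpha_apply_val]
  -- for even `m`, the point `m - 1` is already matched with `m - 2`;
  -- for odd `m`, it is already matched with `m`
  by_cases hpar : m % 2 = 0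
  · rcases hadj p with hup | hdown
    · omega
    · have := ih (ρ p) (by omega) (ρ p) rfl
      rw [hinv, alpha_apply_val] at this
      omega
  · have hq : m - 1 < 2 * k := by omega
    have hρq := ih (m - 1) (by omega) ⟨m - 1, hq⟩ rfl
    rw [alpha_apply_val] at hρq
    have hρq' : ρ ⟨m - 1, hq⟩ = p := Fin.ext (by simp only at hρq; omega)
    rw [← hρq', hinv]
    simp only
    omega

lemma IsStandardForm.conj_alpha_of_adjacent (h : IsStandardForm π a b) {w : Perm (Fin (2 * k))}
    (hadj : ∀ i, (w⁻¹ (b i) : ℕ) = (w⁻¹ (a i) : ℕ) + 1) : π = w * alpha k * w⁻¹ := by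
  have hρ : w⁻¹ * π * w = alpha k := by
    refine eq_alpha_of_adjacent ?_ fun p => ?_
    · rw [show w⁻¹ * π * w * (w⁻¹ * π * w) = w⁻¹ * (π * π) * w by group, h.mul_self]
      group
    · obtain ⟨P, hP⟩ := h.arcEnd_bijective.2 (w p)
      obtain rfl : p = w⁻¹ (arcEnd a b P) := by simp [hP]
      obtain ⟨i, _ | _⟩ := P
      · exact Or.inl (by simpa [arcEnd, h.apply_fst] using hadj i)
      · exact Or.inr (by simpa [arcEnd, h.apply_snd] using hadj i)
  rw [← hρ]
  group

lemma IsStandardForm.apply_snd_eq_alpha (h : IsStandardForm π a b) {w : Perm (Fin (2 * k))}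
    (hconj : π = w * alpha k * w⁻¹) (i : Fin k) : w⁻¹ (b i) = alpha k (w⁻¹ (a i)) := by
  rw [← h.apply_fst, hconj]
  simp

lemma forall_lt_or_forall_gt_of_alpha {pos : Fin k × Bool → Fin (2 * k)}
    (hinj : Function.Injective pos) (hblock : ∀ i, pos (i, true) = alpha k (pos (i, false)))
    {i j : Fin k} (hij : i ≠ j) :
    (∀ s t, pos (i, s) < pos (j, t)) ∨ ∀ s t, pos (j, t) < pos (i, s) := by
  have hne (s t) : pos (i, s) ≠ pos (j, t) := hinj.ne (by simp [hij])
  have hi := congrArg Fin.val (hblock i)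
  have hj := congrArg Fin.val (hblock j)
  rw [alpha_apply_val] at hi hj
  have := hne false false
  have := hne false true
  have := hne true false
  have := hne true true
  rcases lt_or_gt_of_ne (hne false false) with hlt | hlt
  · left; intro s t; cases s <;> cases t <;> omega
  · right; intro s t; cases s <;> cases t <;> omega

lemma IsStandardForm.pairInv_le_blockInv_add (h : IsStandardForm π a b)
    {pos : Fin k × Bool → Fin (2 * k)} (hinj : Function.Injective pos)
    (hblock : ∀ i, pos (i, true) = alpha k (pos (i, false))) {i j : Fin k} (hij : i < j) :
    pairInv (arcEnd a b) i j ≤ blockInv pos (arcEnd a b) i j + blockInv pos (arcEnd a b) j i ∧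
      (blockInv pos (arcEnd a b) i j + blockInv pos (arcEnd a b) j i = pairInv (arcEnd a b) i j ↔
        (b i < b j → pos (i, true) < pos (j, false))) := by
  rcases forall_lt_or_forall_gt_of_alpha hinj hblock hij.ne with hbefore | hafter
  · rw [blockInv_of_forall_lt hbefore, blockInv_of_forall_gt fun s t => hbefore t s, add_zero]
    exact ⟨le_rfl, iff_of_true rfl fun _ => hbefore true false⟩
  · rw [blockInv_of_forall_gt hafter, blockInv_of_forall_lt fun s t => hafter t s, zero_add]
    obtain ⟨hle, heq⟩ := h.pairInv_le_pairInv hij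
    refine ⟨hle, eq_comm.trans (heq.trans ⟨fun hji hlt => absurd hlt hji.not_gt, fun himp => ?_⟩)⟩
    refine (lt_or_gt_of_ne (h.snd_injective.ne hij.ne')).resolve_right fun hlt => ?_
    exact (hafter true false).not_gt (himp hlt)

lemma IsStandardForm.blockInv_self_eq_zero_iff (h : IsStandardForm π a b)
    {pos : Fin k × Bool → Fin (2 * k)} {i : Fin k}
    (hblock : pos (i, true) = alpha k (pos (i, false))) :
    blockInv pos (arcEnd a b) i i = 0 ↔ (pos (i, true) : ℕ) = pos (i, false) + 1 := by
  have hi := congrArg Fin.val hblock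
  rw [alpha_apply_val] at hi
  rw [blockInv_self (val := arcEnd a b) (h.lt i)]
  split_ifs <;> simp <;> omega

theorem IsStandardForm.invNum_eq_invWord_iff (h : IsStandardForm π a b)
    {w : Perm (Fin (2 * k))} (hblock : ∀ i, w⁻¹ (b i) = alpha k (w⁻¹ (a i))) :
    invNum w = invWord k a b ↔
      (∀ i, (w⁻¹ (b i) : ℕ) = (w⁻¹ (a i) : ℕ) + 1) ∧
        ∀ i j, i < j → b i < b j → w⁻¹ (b i) < w⁻¹ (a j) := by
  set pos := arcEnd (⇑w⁻¹ ∘ a) (⇑w⁻¹ ∘ b)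
  have hpos : pos = ⇑w⁻¹ ∘ arcEnd a b := funext fun P => by obtain ⟨i, _ | _⟩ := P <;> rfl
  have hpos_block : ∀ i, pos (i, true) = alpha k (pos (i, false)) := hblock
  have hbij : Function.Bijective pos := hpos ▸ w⁻¹.bijective.comp h.arcEnd_bijective
  have hsum := card_inversions_eq_sum_blockInv w hbij (val := arcEnd a b)
    fun P => by simp [hpos]
  rw [invNum, hsum, invWord_eq_sum_blockInv, sum_sum_eq_iff_of_le
    (fun i => by rw [h.blockInv_alpha_self]; exact Nat.zero_le _)
    (fun i j hij => by
      rw [blockInv_alpha_add _ hij]; exact (h.pairInv_le_blockInv_add hbij.1 hpos_block hij).1)]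
  refine and_congr (forall_congr' fun i => ?_)
    (forall₂_congr fun i j => forall_congr' fun hij => ?_)
  · rw [h.blockInv_alpha_self]
    exact h.blockInv_self_eq_zero_iff (hpos_block i)
  · rw [blockInv_alpha_add _ hij]
    exact (h.pairInv_le_blockInv_add hbij.1 hpos_block hij).2

theorem IsStandardForm.conj_alpha_and_invNum_eq_iff (h : IsStandardForm π a b)
    (w : Perm (Fin (2 * k))) :
    (π = w * alpha k * w⁻¹ ∧ invNum w = invWord k a b) ↔
      (∀ i, (w⁻¹ (b i) : ℕ) = (w⁻¹ (a i) : ℕ) + 1) ∧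
        ∀ i j, i < j → b i < b j → w⁻¹ (b i) < w⁻¹ (a j) := by
  refine ⟨fun ⟨hconj, hinv⟩ => (h.invNum_eq_invWord_iff (h.apply_snd_eq_alpha hconj)).1 hinv,
    fun hw => ?_⟩
  have hconj := h.conj_alpha_of_adjacent hw.1
  exact ⟨hconj, (h.invNum_eq_invWord_iff (h.apply_snd_eq_alpha hconj)).2 hw⟩

end StandardForm

theorem stmt12_general (k : ℕ) (π : Equiv.Perm (Fin (2 * k))) (a b : Fin k → Fin (2 * k))
    (hπ : π * π = 1) (hab : ∀ i, a i < b i)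
    (hmono : StrictMono a) (hpair : ∀ i, π (a i) = b i)
    (w : Equiv.Perm (Fin (2 * k))) :
    ((∃ l : List ℕ, (l.map (sNat (2 * k))).prod = w ∧ l.length = invNum w ∧
        l.foldr (RSfpf (2 * k)) (alpha k) = π) ∧
      invNum w = invWord k a b) ↔
    ((∀ i, (w⁻¹ (b i) : ℕ) = (w⁻¹ (a i) : ℕ) + 1) ∧
      ∀ i j, i < j → b i < b j → w⁻¹ (b i) < w⁻¹ (a j)) := by
  have hstd : IsStandardForm π a b := ⟨hπ, hab, hmono, hpair⟩
  rw [← hstd.conj_alpha_and_invNum_eq_iff w]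
  refine and_congr_left fun hinv => exists_reducedWord_foldr_RSfpf_iff ?_
  rw [hstd.invNum_eq, invNum_alpha, hinv]

/-- Corollary (W-sets of fixed-point free involutions).  Let
`π' = (a_1,b_1)⋯(a_k,b_k) ∈ S_{2k}` be a fixed-point free involution in standard form.
Then `m(w)·α' = π'` (via a reduced word of `w`) with `ℓ(w) = L'(π')` (the inversion number
of the word `(a_1,b_1,…,a_k,b_k)`) if and only if (1) each `a_i` occurs immediately before
`b_i` in the one-line notation of `w`, and (2) whenever `i < j` and `b_i < b_j`, `b_i`
occurs before `a_j` in `w`. -/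
theorem stmt12 (k : ℕ) (π : Equiv.Perm (Fin (2 * k))) (a b : Fin k → Fin (2 * k))
    (hπ : π * π = 1) (hfpf : ∀ x, π x ≠ x) (hab : ∀ i, a i < b i)
    (hmono : StrictMono a) (hpair : ∀ i, π (a i) = b i)
    (w : Equiv.Perm (Fin (2 * k))) :
    ((∃ l : List ℕ, (l.map (sNat (2 * k))).prod = w ∧ l.length = invNum w ∧
        l.foldr (RSfpf (2 * k)) (alpha k) = π) ∧
      invNum w = invWord k a b) ↔
    ((∀ i, (w⁻¹ (b i) : ℕ) = (w⁻¹ (a i) : ℕ) + 1) ∧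
      ∀ i j, i < j → b i < b j → w⁻¹ (b i) < w⁻¹ (a j)) :=
  stmt12_general k π a b hπ hab hmono hpair w
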